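/- arXiv:2405.10815 — 2 statements merged into one kernel-verified Lean document; each statement's English description precedes it below -/
import Mathlib

section
/- Suppose for each pair θ', θ'' ∈ ℝ^m, M(θ',θ'') = E[Ψ_θ(X,θ') Ψ_θ(X,θ'')ᵀ] satisfies M(θ',θ'') ⪰ λ_min I with λ_min > 0, and suppose ‖Ψ_θ(X,θ)‖ ≤ L̄ almost surely for all θ. Define Q(θ) = (1/2) E[‖Ψ(X,θ̄) − Ψ(X,θ)‖²] where θ ↦ Ψ(X,θ) is C¹ with derivative Ψ_θ, and Q_θ(θ) = −E[Ψ_θ(X,θ)(Ψ(X,θ̄) − Ψ(X,θ))]. Then ⟨Q_θ(θ), θ − θ̄⟩ ≥ λ_min ‖θ − θ̄‖², hence ‖Q_θ(θ)‖ ≥ λ_min ‖θ − θ̄‖, and Q(θ) ≤ (L̄²/(2 λ_min²)) ‖Q_θ(θ)‖². -/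
open MeasureTheory
open scoped RealInnerProductSpace

set_option maxHeartbeats 1000000 in
/-- Remark 2.2: Łojasiewicz condition for nonlinear models. -/
theorem stmt_2
    {Ω : Type*} [MeasurableSpace Ω] (μ : Measure Ω) [IsProbabilityMeasure μ]
    {m nf : ℕ}
    (Ψ : Ω → EuclideanSpace ℝ (Fin m) → EuclideanSpace ℝ (Fin nf))
    (D : Ω → EuclideanSpace ℝ (Fin m) →
      (EuclideanSpace ℝ (Fin m) →L[ℝ] EuclideanSpace ℝ (Fin nf)))
    (hC1 : ∀ ω θ, HasFDerivAt (Ψ ω) (D ω θ) θ)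
    (hDcont : ∀ ω, Continuous (D ω))
    (Lbar lammin : ℝ) (hlam : 0 < lammin)
    (hbnd : ∀ᵐ ω ∂μ, ∀ θ, ‖D ω θ‖ ≤ Lbar)
    (hPD : ∀ θ' θ'' v, lammin * ‖v‖ ^ 2 ≤ ∫ ω, ⟪D ω θ' v, D ω θ'' v⟫ ∂μ)
    (θbar θ : EuclideanSpace ℝ (Fin m))
    (hint1 : Integrable (fun ω => ‖Ψ ω θbar - Ψ ω θ‖ ^ 2) μ)
    (hint2 : Integrable
      (fun ω => (ContinuousLinearMap.adjoint (D ω θ)) (Ψ ω θbar - Ψ ω θ)) μ)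
    (Qθ : EuclideanSpace ℝ (Fin m))
    (hQθ : Qθ = -∫ ω, (ContinuousLinearMap.adjoint (D ω θ)) (Ψ ω θbar - Ψ ω θ) ∂μ) :
    lammin * ‖θ - θbar‖ ^ 2 ≤ ⟪Qθ, θ - θbar⟫ ∧
    lammin * ‖θ - θbar‖ ≤ ‖Qθ‖ ∧
    (1 / 2) * (∫ ω, ‖Ψ ω θbar - Ψ ω θ‖ ^ 2 ∂μ) ≤
      (Lbar ^ 2 / (2 * lammin ^ 2)) * ‖Qθ‖ ^ 2 := by
  obtain ⟨ω0, hω0⟩ := hbnd.exists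
  have hL0 : 0 ≤ Lbar := le_trans (norm_nonneg _) (hω0 θ)
  by_cases hv0 : θbar - θ = 0
  · rw [sub_eq_zero] at hv0
    subst hv0
    simp only [sub_self, map_zero, integral_zero, neg_zero] at hQθ
    subst hQθ
    refine ⟨by simp, by simp, by simp⟩
  · set v : EuclideanSpace ℝ (Fin m) := θbar - θ with hv
    have hvne : v ≠ 0 := hv0
    have hvpos : 0 < ‖v‖ := norm_pos_iff.mpr hvne
    -- continuity of the derivative along the segment
    have hcont : ∀ ω, Continuous fun τ : ℝ => D ω (θ + τ • v) := fun ω =>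
      (hDcont ω).comp (by continuity)
    have hγcont : ∀ ω, Continuous fun τ : ℝ => D ω (θ + τ • v) v := fun ω =>
      (ContinuousLinearMap.apply ℝ _ v).continuous.comp (hcont ω)
    have hderiv : ∀ ω (τ : ℝ),
        HasDerivAt (fun s : ℝ => Ψ ω (θ + s • v)) (D ω (θ + τ • v) v) τ := by
      intro ω τ
      have h1 : HasDerivAt (fun s : ℝ => θ + s • v) v τ := by
        simpa using ((hasDerivAt_id τ).smul_const v).const_add θ
      exact (hC1 ω (θ + τ • v)).comp_hasDerivAt τ h1
    have hftc : ∀ ω, (∫ τ in (0:ℝ)..1, D ω (θ + τ • v) v) = Ψ ω θbar - Ψ ω θ := by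
      intro ω
      have h := intervalIntegral.integral_eq_sub_of_hasDerivAt
        (fun τ _ => hderiv ω τ) ((hγcont ω).intervalIntegrable 0 1)
      simpa [hv] using h
    -- the cross-correlation integrand
    set g : Ω → ℝ → ℝ := fun ω τ => ⟪D ω (θ + τ • v) v, D ω θ v⟫ with hg
    have hgcont : ∀ ω, Continuous (g ω) := fun ω =>
      (hγcont ω).inner continuous_const
    have hkey : ∀ ω, (∫ τ in (0:ℝ)..1, g ω τ) = ⟪Ψ ω θbar - Ψ ω θ, D ω θ v⟫ := by
      intro ω
      have h1 : (∫ τ in (0:ℝ)..1, g ω τ)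
          = ∫ τ in (0:ℝ)..1, (innerSL ℝ (D ω θ v)) (D ω (θ + τ • v) v) :=
        intervalIntegral.integral_congr fun τ _ => real_inner_comm _ _
      rw [h1, (innerSL ℝ (D ω θ v)).intervalIntegral_comp_comm
        ((hγcont ω).intervalIntegrable 0 1), hftc ω, innerSL_apply_apply]
      exact real_inner_comm _ _
    -- integrability in ω for each fixed τ
    have hgint : ∀ τ : ℝ, Integrable (fun ω => g ω τ) μ := by
      intro τ
      by_contra hni
      have h := hPD (θ + τ • v) θ v
      rw [integral_undef hni] at h
      have hvsq : 0 < ‖v‖ ^ 2 := by positivity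
      nlinarith [mul_pos hlam hvsq]
    -- construction of a null exceptional set
    choose G hG1 hG2 using fun q : ℚ => (hgint (q : ℝ)).aestronglyMeasurable
    set N0 : Set Ω :=
      {ω | ¬ ∀ θ', ‖D ω θ'‖ ≤ Lbar} ∪ ⋃ q : ℚ, {ω | g ω (q : ℝ) ≠ G q ω} with hN0
    have hN0null : μ N0 = 0 := by
      apply measure_union_null
      · exact hbnd
      · exact measure_iUnion_null fun q => (hG2 q)
    set N : Set Ω := toMeasurable μ N0 with hN
    have hNmeas : MeasurableSet N := measurableSet_toMeasurable μ N0
    have hNnull : μ N = 0 := by rw [hN, measure_toMeasurable]; exact hN0null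
    have hNsub : ∀ ω, ω ∉ N →
        (∀ θ', ‖D ω θ'‖ ≤ Lbar) ∧ ∀ q : ℚ, g ω (q : ℝ) = G q ω := by
      intro ω hω
      have hω0' : ω ∉ N0 := fun hmem => hω (subset_toMeasurable μ N0 hmem)
      have h1 : ∀ θ', ‖D ω θ'‖ ≤ Lbar := by
        by_contra hx
        exact hω0' (Set.mem_union_left _ hx)
      have h2 : ∀ q : ℚ, g ω (q : ℝ) = G q ω := by
        intro q
        by_contra hne
        exact hω0' (Set.mem_union_right _ (Set.mem_iUnion.mpr ⟨q, hne⟩))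
      exact ⟨h1, h2⟩
    -- the modified integrand
    classical
    set h : Ω → ℝ → ℝ := fun ω τ => if ω ∈ N then 0 else g ω τ with hh
    have hhcont : ∀ ω, Continuous (h ω) := by
      intro ω
      by_cases hω : ω ∈ N
      · simp only [hh, hω, if_true]; exact continuous_const
      · simp only [hh, hω, if_false]; exact hgcont ω
    have hmq : ∀ q : ℚ, StronglyMeasurable fun ω => h ω (q : ℝ) := by
      intro q
      have heq : (fun ω => h ω (q : ℝ)) = fun ω => if ω ∈ N then 0 else G q ω := by
        funext ω
        by_cases hω : ω ∈ N
        · simp [hh, hω]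
        · simp only [hh, hω, if_false]
          exact (hNsub ω hω).2 q
      rw [heq]
      exact (Measurable.ite hNmeas measurable_const (hG1 q).measurable).stronglyMeasurable
    have hmτ : ∀ τ : ℝ, StronglyMeasurable fun ω => h ω τ := by
      intro τ
      have hτcl : τ ∈ closure (Set.range ((↑) : ℚ → ℝ)) := Rat.denseRange_cast τ
      obtain ⟨u, hu1, hu2⟩ := mem_closure_iff_seq_limit.mp hτcl
      choose q hq using hu1
      refine stronglyMeasurable_of_tendsto (f := fun n ω => h ω (u n))
        Filter.atTop (fun n => ?_) ?_
      · show StronglyMeasurable fun ω => h ω (u n)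
        rw [← hq n]
        exact hmq (q n)
      · rw [tendsto_pi_nhds]
        intro ω
        exact ((hhcont ω).tendsto τ).comp hu2
    have hum : StronglyMeasurable (Function.uncurry fun (τ : ℝ) (ω : Ω) => h ω τ) :=
      stronglyMeasurable_uncurry_of_continuous_of_stronglyMeasurable
        (fun ω => hhcont ω) hmτ
    set ν : Measure ℝ := volume.restrict (Set.Ioc (0:ℝ) 1) with hν
    have hνfin : IsFiniteMeasure ν := by
      constructor
      rw [hν, Measure.restrict_apply_univ, Real.volume_Ioc]
      simp
    have hswapm : AEStronglyMeasurable (fun p : Ω × ℝ => h p.1 p.2) (μ.prod ν) :=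
      (hum.comp_measurable measurable_swap).aestronglyMeasurable
    -- uniform bound
    have hbound : ∀ (ω : Ω) (τ : ℝ), ‖h ω τ‖ ≤ Lbar ^ 2 * ‖v‖ ^ 2 := by
      intro ω τ
      by_cases hω : ω ∈ N
      · simp only [hh, hω, if_true, norm_zero]
        positivity
      · simp only [hh, hω, if_false, hg]
        have hb := (hNsub ω hω).1
        have h1 : ‖D ω (θ + τ • v) v‖ ≤ Lbar * ‖v‖ :=
          le_trans ((D ω (θ + τ • v)).le_opNorm v)
            (mul_le_mul_of_nonneg_right (hb _) (norm_nonneg v))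
        have h2 : ‖D ω θ v‖ ≤ Lbar * ‖v‖ :=
          le_trans ((D ω θ).le_opNorm v)
            (mul_le_mul_of_nonneg_right (hb _) (norm_nonneg v))
        calc ‖⟪D ω (θ + τ • v) v, D ω θ v⟫‖
            ≤ ‖D ω (θ + τ • v) v‖ * ‖D ω θ v‖ := norm_inner_le_norm _ _
          _ ≤ (Lbar * ‖v‖) * (Lbar * ‖v‖) :=
              mul_le_mul h1 h2 (norm_nonneg _) (by positivity)
          _ = Lbar ^ 2 * ‖v‖ ^ 2 := by ring
    have hIntProd : Integrable (fun p : Ω × ℝ => h p.1 p.2) (μ.prod ν) := by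
      have : IsFiniteMeasure (μ.prod ν) := by infer_instance
      exact Integrable.mono' (integrable_const (Lbar ^ 2 * ‖v‖ ^ 2)) hswapm
        (Filter.Eventually.of_forall fun p => hbound p.1 p.2)
    -- a.e. complement of N
    have hNae : ∀ᵐ ω ∂μ, ω ∉ N := by
      rw [ae_iff]
      simpa using hNnull
    -- Fubini
    have hFub : (∫ ω, ∫ τ, h ω τ ∂ν ∂μ) = ∫ τ, ∫ ω, h ω τ ∂μ ∂ν :=
      integral_integral_swap hIntProd
    -- the outer integral equals the inner product integral
    have hL : (∫ ω, ∫ τ, h ω τ ∂ν ∂μ) = ∫ ω, ⟪Ψ ω θbar - Ψ ω θ, D ω θ v⟫ ∂μ := by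
      apply integral_congr_ae
      filter_upwards [hNae] with ω hω
      have heq : (fun τ => h ω τ) = g ω := by
        funext τ; simp [hh, hω]
      rw [heq, hν, ← intervalIntegral.integral_of_le (by norm_num : (0:ℝ) ≤ 1)]
      exact hkey ω
    -- lower bound on the swapped integral
    have hR : lammin * ‖v‖ ^ 2 ≤ ∫ τ, ∫ ω, h ω τ ∂μ ∂ν := by
      have hτall : ∀ τ : ℝ, lammin * ‖v‖ ^ 2 ≤ ∫ ω, h ω τ ∂μ := by
        intro τ
        have heq : (∫ ω, h ω τ ∂μ) = ∫ ω, g ω τ ∂μ := by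
          apply integral_congr_ae
          filter_upwards [hNae] with ω hω
          simp [hh, hω]
        rw [heq]
        exact hPD (θ + τ • v) θ v
      have hinner_int : Integrable (fun τ => ∫ ω, h ω τ ∂μ) ν :=
        hIntProd.integral_prod_right
      have hconst : (∫ _ : ℝ, lammin * ‖v‖ ^ 2 ∂ν) = lammin * ‖v‖ ^ 2 := by
        rw [integral_const]
        rw [hν, measureReal_def, Measure.restrict_apply_univ, Real.volume_Ioc]
        simp
      calc lammin * ‖v‖ ^ 2 = ∫ _ : ℝ, lammin * ‖v‖ ^ 2 ∂ν := hconst.symm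
        _ ≤ ∫ τ, ∫ ω, h ω τ ∂μ ∂ν :=
            integral_mono (integrable_const _) hinner_int hτall
    -- identify the inner product with Qθ
    have hQ : ⟪Qθ, θ - θbar⟫ = ∫ ω, ⟪Ψ ω θbar - Ψ ω θ, D ω θ v⟫ ∂μ := by
      have hsub : θ - θbar = -v := by rw [hv]; abel
      rw [hQθ, hsub, inner_neg_neg, real_inner_comm, ← integral_inner hint2 v]
      apply integral_congr_ae
      apply Filter.Eventually.of_forall
      intro ω
      exact (real_inner_comm _ _).trans
        (ContinuousLinearMap.adjoint_inner_left (D ω θ) v (Ψ ω θbar - Ψ ω θ))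
    have hnorm : ‖θ - θbar‖ = ‖v‖ := by rw [hv, norm_sub_rev]
    have part1 : lammin * ‖θ - θbar‖ ^ 2 ≤ ⟪Qθ, θ - θbar⟫ := by
      rw [hnorm, hQ, ← hL, hFub]
      exact hR
    have part2 : lammin * ‖θ - θbar‖ ≤ ‖Qθ‖ := by
      have hcs : ⟪Qθ, θ - θbar⟫ ≤ ‖Qθ‖ * ‖θ - θbar‖ := real_inner_le_norm _ _
      have hwpos : 0 < ‖θ - θbar‖ := by rw [hnorm]; exact hvpos
      nlinarith [part1]
    refine ⟨part1, part2, ?_⟩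
    -- part 3
    have hΔbnd : ∀ᵐ ω ∂μ, ‖Ψ ω θbar - Ψ ω θ‖ ^ 2 ≤ Lbar ^ 2 * ‖v‖ ^ 2 := by
      filter_upwards [hbnd] with ω hω
      have hΔ : ‖Ψ ω θbar - Ψ ω θ‖ ≤ Lbar * ‖v‖ := by
        rw [← hftc ω]
        have := intervalIntegral.norm_integral_le_of_norm_le_const
          (C := Lbar * ‖v‖) (f := fun τ => D ω (θ + τ • v) v) (a := (0:ℝ)) (b := 1)
          (fun x _ => le_trans ((D ω (θ + x • v)).le_opNorm v)
            (mul_le_mul_of_nonneg_right (hω _) (norm_nonneg v)))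
        simpa using this
      nlinarith [norm_nonneg (Ψ ω θbar - Ψ ω θ), mul_nonneg hL0 (norm_nonneg v)]
    have hIle : (∫ ω, ‖Ψ ω θbar - Ψ ω θ‖ ^ 2 ∂μ) ≤ Lbar ^ 2 * ‖v‖ ^ 2 := by
      have := integral_mono_ae hint1 (integrable_const (Lbar ^ 2 * ‖v‖ ^ 2)) hΔbnd
      simpa using this
    have hIpos : 0 ≤ ∫ ω, ‖Ψ ω θbar - Ψ ω θ‖ ^ 2 ∂μ :=
      integral_nonneg fun ω => by positivity
    have hsq : lammin ^ 2 * ‖v‖ ^ 2 ≤ ‖Qθ‖ ^ 2 := by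
      have h2 : lammin * ‖v‖ ≤ ‖Qθ‖ := by rwa [hnorm] at part2
      nlinarith [mul_nonneg hlam.le (norm_nonneg v)]
    have hrw : Lbar ^ 2 / (2 * lammin ^ 2) * ‖Qθ‖ ^ 2
        = Lbar ^ 2 * ‖Qθ‖ ^ 2 / (2 * lammin ^ 2) := by ring
    rw [hrw, le_div_iff₀ (by positivity)]
    nlinarith [mul_le_mul_of_nonneg_left hsq (sq_nonneg Lbar),
      mul_le_mul_of_nonneg_right hIle (sq_nonneg lammin)]
end

section
/- Under the bounds ‖Δ⁰_β‖² ≤ 2 L_{∇g}² L̄_f² Q, ‖Q_β‖² ≤ 2 L̄_f² Q, and with Δ^λ_β = Δ⁰_β + λ Q_β, for any α > 0, λ ≥ 0 and any orthogonal projection P, one has −⟨G_β + α Δ^λ_β, P(G_β − Δ⁰_β)⟩ ≤ (L̄_f²/2)((α+1) L_{∇g} + αλ)² Q, for any vector G_β. -/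
/-!
Write `Gβ + α Δ^λ = (Gβ - Δ⁰) + v` with `v = (α + 1) Δ⁰ + αλ Qβ` and `u = P (Gβ - Δ⁰)`.
Since `P` is a symmetric idempotent, `⟪Gβ - Δ⁰, u⟫ = ‖u‖²`, so the descent rate is
`-‖u‖² - ⟪v, u⟫ ≤ ‖v‖ ‖u‖ - ‖u‖² ≤ ‖v‖² / 4`, and the two error bounds give
`‖v‖ ≤ ((α + 1) L_{∇g} + αλ) √(2 L̄_f² Q)`.
-/

open scoped RealInnerProductSpace

section Projection

variable {E : Type*} [NormedAddCommGroup E] [InnerProductSpace ℝ E]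

theorem inner_apply_self_eq_norm_sq_of_symm_idem {P : E → E}
    (hsym : ∀ x y, ⟪P x, y⟫ = ⟪x, P y⟫) (hidem : ∀ x, P (P x) = P x) (x : E) :
    ⟪x, P x⟫ = ‖P x‖ ^ 2 :=
  calc ⟪x, P x⟫ = ⟪x, P (P x)⟫ := by rw [hidem]
    _ = ⟪P x, P x⟫ := (hsym _ _).symm
    _ = ‖P x‖ ^ 2 := real_inner_self_eq_norm_sq _

theorem neg_inner_add_apply_le_of_symm_idem {P : E → E}
    (hsym : ∀ x y, ⟪P x, y⟫ = ⟪x, P y⟫) (hidem : ∀ x, P (P x) = P x) (x v : E) :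
    -⟪x + v, P x⟫ ≤ ‖v‖ ^ 2 / 4 := by
  have hcs : -(‖v‖ * ‖P x‖) ≤ ⟪v, P x⟫ := neg_le_of_abs_le (abs_real_inner_le_norm v (P x))
  rw [inner_add_left, inner_apply_self_eq_norm_sq_of_symm_idem hsym hidem]
  nlinarith [sq_nonneg (2 * ‖P x‖ - ‖v‖)]

end Projection

theorem norm_smul_add_smul_le {E : Type*} [SeminormedAddCommGroup E] [NormedSpace ℝ E]
    {a b : E} {c d A B : ℝ} (hc : 0 ≤ c) (hd : 0 ≤ d) (ha : ‖a‖ ≤ A) (hb : ‖b‖ ≤ B) :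
    ‖c • a + d • b‖ ≤ c * A + d * B :=
  calc ‖c • a + d • b‖ ≤ ‖c • a‖ + ‖d • b‖ := norm_add_le _ _
    _ = c * ‖a‖ + d * ‖b‖ := by rw [norm_smul_of_nonneg hc, norm_smul_of_nonneg hd]
    _ ≤ c * A + d * B := by gcongr

theorem stmt_11_general
    {n : ℕ} (Gβ Δ0 Qβ : EuclideanSpace ℝ (Fin n))
    (Lg Lf Q α lam : ℝ)
    (hα : 0 < α) (hlam : 0 ≤ lam) (hQ : 0 ≤ Q) (hLg : 0 < Lg)
    (hΔ0 : ‖Δ0‖ ^ 2 ≤ 2 * Lg ^ 2 * Lf ^ 2 * Q)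
    (hQβ : ‖Qβ‖ ^ 2 ≤ 2 * Lf ^ 2 * Q)
    (P : EuclideanSpace ℝ (Fin n) →L[ℝ] EuclideanSpace ℝ (Fin n))
    (hsym : ∀ x y, ⟪P x, y⟫ = ⟪x, P y⟫)
    (hidem : ∀ x, P (P x) = P x) :
    -⟪Gβ + α • (Δ0 + lam • Qβ), P (Gβ - Δ0)⟫ ≤
      (Lf ^ 2 / 2) * ((α + 1) * Lg + α * lam) ^ 2 * Q := by
  set M := √(2 * Lf ^ 2 * Q)
  have hM : M ^ 2 = 2 * Lf ^ 2 * Q := Real.sq_sqrt (by positivity)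
  have hM₀ : 0 ≤ M := Real.sqrt_nonneg _
  have hΔ0M : ‖Δ0‖ ≤ Lg * M :=
    (pow_le_pow_iff_left₀ (norm_nonneg _) (by positivity) two_ne_zero).mp
      (by rw [mul_pow, hM]; linarith)
  have hQβM : ‖Qβ‖ ≤ M :=
    (pow_le_pow_iff_left₀ (norm_nonneg _) hM₀ two_ne_zero).mp (by rwa [hM])
  have hv : ‖(α + 1) • Δ0 + (α * lam) • Qβ‖ ≤ ((α + 1) * Lg + α * lam) * M :=
    (norm_smul_add_smul_le (by positivity) (by positivity) hΔ0M hQβM).trans_eq (by ring)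
  calc -⟪Gβ + α • (Δ0 + lam • Qβ), P (Gβ - Δ0)⟫
        = -⟪(Gβ - Δ0) + ((α + 1) • Δ0 + (α * lam) • Qβ), P (Gβ - Δ0)⟫ := by
          congr 2; module
    _ ≤ ‖(α + 1) • Δ0 + (α * lam) • Qβ‖ ^ 2 / 4 :=
          neg_inner_add_apply_le_of_symm_idem hsym hidem _ _
    _ ≤ (((α + 1) * Lg + α * lam) * M) ^ 2 / 4 := by gcongr
    _ = (Lf ^ 2 / 2) * ((α + 1) * Lg + α * lam) ^ 2 * Q := by rw [mul_pow, hM]; ring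

/-- Proposition 4.7 (first claim, vector form): descent rate of the
β-component of the Lyapunov function. -/
theorem stmt_11
    {n : ℕ} (Gβ Δ0 Qβ : EuclideanSpace ℝ (Fin n))
    (Lg Lf Q α lam : ℝ)
    (hα : 0 < α) (hlam : 0 ≤ lam) (hQ : 0 ≤ Q) (hLg : 0 < Lg) (hLf : 0 < Lf)
    (hΔ0 : ‖Δ0‖ ^ 2 ≤ 2 * Lg ^ 2 * Lf ^ 2 * Q)
    (hQβ : ‖Qβ‖ ^ 2 ≤ 2 * Lf ^ 2 * Q)
    (P : EuclideanSpace ℝ (Fin n) →L[ℝ] EuclideanSpace ℝ (Fin n))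
    (hsym : ∀ x y, ⟪P x, y⟫ = ⟪x, P y⟫)
    (hidem : ∀ x, P (P x) = P x) :
    -⟪Gβ + α • (Δ0 + lam • Qβ), P (Gβ - Δ0)⟫ ≤
      (Lf ^ 2 / 2) * ((α + 1) * Lg + α * lam) ^ 2 * Q :=
  stmt_11_general Gβ Δ0 Qβ Lg Lf Q α lam hα hlam hQ hLg hΔ0 hQβ P hsym hidem
end
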